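/- Let f : A ⥤ B be a functor such that the canonical comparison functor r : A ⥤ P into the pseudo-pullback P of c_B and f^𝟚 is an equivalence of categories. Then f reflects isomorphisms: every morphism n of A such that f.map n is an isomorphism is itself an isomorphism. -/

import Mathlib

open CategoryTheory

universe v₁ v₂ u₁ u₂

/-- The functor `c_A : A ⥤ Arrow A` sending an object to its identity arrow. -/
def idArrowFunctor (A : Type u₁) [Category.{v₁} A] : A ⥤ Arrow A where
  obj a := Arrow.mk (𝟙 a)
  map {a a'} x := Arrow.homMk (u := x) (v := x) (by simp)

variable {A : Type u₁} {B : Type u₂} [Category.{v₁} A] [Category.{v₂} B]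

/-- The pseudo-pullback of `c_B : B ⥤ B^𝟚` and `f^𝟚 : A^𝟚 ⥤ B^𝟚`, realized as the full
subcategory of the comma category `(c_B ↓ f^𝟚)` spanned by the objects whose structural
morphism is an isomorphism. -/
abbrev PseudoPullback (f : A ⥤ B) :=
  ObjectProperty.FullSubcategory (fun X : Comma (idArrowFunctor B) f.mapArrow => IsIso X.hom)

/-- The canonical comparison functor `r : A ⥤ P`. -/
def comparison (f : A ⥤ B) : A ⥤ PseudoPullback f where
  obj a :=
    ⟨{ left := f.obj a
       right := Arrow.mk (𝟙 a)
       hom := (Arrow.isoMk (f := (idArrowFunctor B).obj (f.obj a))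
         (g := f.mapArrow.obj (Arrow.mk (𝟙 a))) (Iso.refl _) (Iso.refl _) (by simp [idArrowFunctor, Functor.mapArrow])).hom },
      inferInstance⟩
  map {a a'} x :=
    ObjectProperty.homMk
    { left := f.map x
      right := Arrow.homMk (u := x) (v := x) (by simp)
      w := by ext <;> (simp [idArrowFunctor, Arrow.isoMk, Functor.mapArrow] <;> exact (Category.comp_id _).trans (Category.id_comp _).symm) }

/-- The functor `u : P ⥤ A` sending `(b, g, φ)` to the domain of `g`. -/
def pbProj (f : A ⥤ B) : PseudoPullback f ⥤ A where
  obj X := X.obj.right.left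
  map g := g.hom.right.left

/-- If the canonical comparison functor `r : A ⥤ P` into the pseudo-pullback `P` of `c_B`
and `f^𝟚` is an equivalence of categories, then `f` reflects isomorphisms. -/
theorem reflectsIsos_of_comparison_isEquivalence (f : A ⥤ B)
    (h : (comparison f).IsEquivalence) :
    ∀ {a a' : A} (n : a ⟶ a'), IsIso (f.map n) → IsIso n := by
  intro a a' n hn
  -- Build an object of the pseudo-pullback with right component `Arrow.mk n`.
  let X : PseudoPullback f :=
    ⟨{ left := f.obj a
       right := Arrow.mk n
       hom := (Arrow.isoMk (f := (idArrowFunctor B).obj (f.obj a))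
         (g := f.mapArrow.obj (Arrow.mk n)) (Iso.refl _) (@asIso _ _ _ _ (f.map n) hn)
         (by simp [idArrowFunctor, Functor.mapArrow])).hom },
     inferInstance⟩
  obtain ⟨a₀, ⟨e⟩⟩ := h.essSurj.mem_essImage X
  -- The right component of `e` is an iso in `Arrow A` between `Arrow.mk (𝟙 a₀)` and `Arrow.mk n`.
  let e' : Arrow.mk (𝟙 a₀) ≅ Arrow.mk n :=
    ((Comma.snd (idArrowFunctor B) f.mapArrow).mapIso
      ((ObjectProperty.ι _).mapIso e))
  have hu : IsIso e'.hom.left := by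
    refine ⟨e'.inv.left, ?_, ?_⟩
    · exact congrArg CommaMorphism.left e'.hom_inv_id
    · exact congrArg CommaMorphism.left e'.inv_hom_id
  have hv : IsIso e'.hom.right := by
    refine ⟨e'.inv.right, ?_, ?_⟩
    · exact congrArg CommaMorphism.right e'.hom_inv_id
    · exact congrArg CommaMorphism.right e'.inv_hom_id
  have hw : e'.hom.left ≫ n = 𝟙 a₀ ≫ e'.hom.right := e'.hom.w
  have : n = inv e'.hom.left ≫ e'.hom.right := by
    rw [Category.id_comp] at hw
    rw [← hw, IsIso.inv_hom_id_assoc]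
  rw [this]
  infer_instance
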